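/- arXiv:2205.04867 — 3 statements merged into one kernel-verified Lean document; each statement's English description precedes it below -/
import Mathlib

section
/- Let 0 < q < 1 and let p, r, y, f, h : ℝ → ℝ. Assume that for all x ≠ 0: (1/q)·(D_{q⁻¹}(D_q y))(x) + p(x)·(D_{q⁻¹}y)(x) + r(x)·y(x) = 0, and (1/q)·(D_{q⁻¹}f)(x) = p(x)·f(x). Then for all x ≠ 0, the q-derivative at x of the function G(x) := f(x/q)·( y(x/q)·(D_{q⁻¹}h)(x) − h(x/q)·(D_{q⁻¹}y)(x) ) equals f(x)·( (1/q)·(D_{q⁻¹}(D_q h))(x) + p(x)·(D_{q⁻¹}h)(x) + r(x)·h(x) )·y(x). (Equivalently, G is an indefinite Jackson q-integral of the latter function.) -/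
/-!
With the `q`-Wronskian `W = y D_q h - h D_q y`, the function integrated is `G(x) = (f W)(x/q)`,
so `D_q G = q⁻¹ D_{q⁻¹}(f W)`. The `q⁻¹`-product rule together with `D_{q⁻¹} f = q p f` gives
`D_q G = f (q⁻¹ D_{q⁻¹} W + p (y D_{q⁻¹} h - h D_{q⁻¹} y))`, and the mixed terms cancel in
`D_{q⁻¹} W = y D_{q⁻¹} D_q h - h D_{q⁻¹} D_q y`. What remains is `f (y L[h] - h L[y])`, where
`L` is the second-order operator, and `L[y] = 0`.
-/

/-- The Jackson `q`-derivative `(D_q f)(x) = (f(x) - f(qx)) / ((1-q)x)`. -/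
noncomputable def qDeriv (q : ℝ) (f : ℝ → ℝ) (x : ℝ) : ℝ :=
  (f x - f (q * x)) / ((1 - q) * x)

/-- The `q⁻¹`-derivative `(D_{q⁻¹} f)(x) = q (f(x/q) - f(x)) / ((1-q)x)`. -/
noncomputable def qInvDeriv (q : ℝ) (f : ℝ → ℝ) (x : ℝ) : ℝ :=
  q * (f (x / q) - f x) / ((1 - q) * x)

noncomputable def qWronskian (q : ℝ) (y h : ℝ → ℝ) (x : ℝ) : ℝ :=
  y x * qDeriv q h x - h x * qDeriv q y x

theorem qInvDeriv_sub (q : ℝ) (f g : ℝ → ℝ) (x : ℝ) :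
    qInvDeriv q (fun t => f t - g t) x = qInvDeriv q f x - qInvDeriv q g x := by
  unfold qInvDeriv
  ring

theorem qInvDeriv_mul (q : ℝ) (f g : ℝ → ℝ) (x : ℝ) :
    qInvDeriv q (fun t => f t * g t) x = f x * qInvDeriv q g x + g (x / q) * qInvDeriv q f x := by
  unfold qInvDeriv
  ring

theorem qDeriv_apply_div {q : ℝ} (hq : q ≠ 0) (g : ℝ → ℝ) (x : ℝ) :
    qDeriv q g (x / q) = qInvDeriv q g x := by
  rw [qDeriv, qInvDeriv, mul_div_cancel₀ x hq, mul_div_assoc', div_div_eq_mul_div, mul_comm q]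

theorem qDeriv_comp_div {q : ℝ} (hq : q ≠ 0) (g : ℝ → ℝ) (x : ℝ) :
    qDeriv q (fun t => g (t / q)) x = qInvDeriv q g x / q := by
  rw [qDeriv, qInvDeriv, mul_div_cancel_left₀ x hq, mul_div_assoc, mul_div_cancel_left₀ _ hq]

theorem qWronskian_apply_div {q : ℝ} (hq : q ≠ 0) (y h : ℝ → ℝ) (x : ℝ) :
    qWronskian q y h (x / q) = y (x / q) * qInvDeriv q h x - h (x / q) * qInvDeriv q y x := by
  rw [qWronskian, qDeriv_apply_div hq, qDeriv_apply_div hq]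

-- Both sides equal `q (y(x) h(x/q) - h(x) y(x/q)) / ((1-q) x)`: the product `y(x/q) h(x/q)` cancels.
theorem apply_div_mul_qInvDeriv_sub (q : ℝ) (y h : ℝ → ℝ) (x : ℝ) :
    y (x / q) * qInvDeriv q h x - h (x / q) * qInvDeriv q y x
      = y x * qInvDeriv q h x - h x * qInvDeriv q y x := by
  unfold qInvDeriv
  ring

theorem qInvDeriv_qWronskian {q : ℝ} (hq : q ≠ 0) (y h : ℝ → ℝ) (x : ℝ) :
    qInvDeriv q (qWronskian q y h) x
      = y x * qInvDeriv q (qDeriv q h) x - h x * qInvDeriv q (qDeriv q y) x := by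
  change qInvDeriv q (fun t => y t * qDeriv q h t - h t * qDeriv q y t) x = _
  rw [qInvDeriv_sub, qInvDeriv_mul, qInvDeriv_mul,
    qDeriv_apply_div hq, qDeriv_apply_div hq]
  ring

theorem lagrangian_HSOqDE_general (q : ℝ) (hq : 0 < q)
    (p r y f h : ℝ → ℝ)
    (hy : ∀ x : ℝ, x ≠ 0 →
      (1 / q) * qInvDeriv q (qDeriv q y) x + p x * qInvDeriv q y x + r x * y x = 0)
    (hf : ∀ x : ℝ, x ≠ 0 → (1 / q) * qInvDeriv q f x = p x * f x) :
    ∀ x : ℝ, x ≠ 0 →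
      qDeriv q
        (fun t => f (t / q) * (y (t / q) * qInvDeriv q h t - h (t / q) * qInvDeriv q y t)) x
      = f x * ((1 / q) * qInvDeriv q (qDeriv q h) x + p x * qInvDeriv q h x + r x * h x)
          * y x := by
  intro x hx
  have hq0 : q ≠ 0 := hq.ne'
  have hG : (fun t => f (t / q) * (y (t / q) * qInvDeriv q h t - h (t / q) * qInvDeriv q y t))
      = fun t => f (t / q) * qWronskian q y h (t / q) := by
    funext t
    rw [qWronskian_apply_div hq0]
  rw [hG, qDeriv_comp_div (g := fun t => f t * qWronskian q y h t) hq0, qInvDeriv_mul,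
    qInvDeriv_qWronskian hq0, qWronskian_apply_div hq0, apply_div_mul_qInvDeriv_sub]
  linear_combination (y x * qInvDeriv q h x - h x * qInvDeriv q y x) * hf x hx
    - f x * h x * hy x hx

/-- Lagrangian method for homogeneous second-order q-difference equations
(version with `D_{q⁻¹}` in the first-order term). -/
theorem lagrangian_HSOqDE (q : ℝ) (hq : 0 < q) (hq1 : q < 1)
    (p r y f h : ℝ → ℝ)
    (hy : ∀ x : ℝ, x ≠ 0 →
      (1 / q) * qInvDeriv q (qDeriv q y) x + p x * qInvDeriv q y x + r x * y x = 0)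
    (hf : ∀ x : ℝ, x ≠ 0 → (1 / q) * qInvDeriv q f x = p x * f x) :
    ∀ x : ℝ, x ≠ 0 →
      qDeriv q
        (fun t => f (t / q) * (y (t / q) * qInvDeriv q h t - h (t / q) * qInvDeriv q y t)) x
      = f x * ((1 / q) * qInvDeriv q (qDeriv q h) x + p x * qInvDeriv q h x + r x * h x)
          * y x :=
  lagrangian_HSOqDE_general q hq p r y f h hy hf
end

section
/- Let 0 < q < 1 and let p, r, y, f, h : ℝ → ℝ. Assume that for all x ≠ 0: (1/q)·(D_{q⁻¹}(D_q y))(x) + p(x)·(D_{q⁻¹}y)(x) + r(x)·y(x) = 0; (1/q)·(D_{q⁻¹}f)(x) = p(x)·f(x); f(x) ≠ 0; and h satisfies the inhomogeneous equation (1/q)·(D_{q⁻¹}(D_q h))(x) + p(x)·(D_{q⁻¹}h)(x) + r(x)·h(x) = 1/f(x). Then for all x ≠ 0, the q-derivative at x of the function G(x) := f(x/q)·( y(x/q)·(D_{q⁻¹}h)(x) − h(x/q)·(D_{q⁻¹}y)(x) ) equals y(x); moreover for all x ≠ 0 one has y(x/q)·(D_{q⁻¹}h)(x) − h(x/q)·(D_{q⁻¹}y)(x)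 = y(x)·(D_{q⁻¹}h)(x) − h(x)·(D_{q⁻¹}y)(x). -/
/-!
This is the q-analogue of the Lagrange identity `(f W)' = f (y L[h] - h L[y])` for the
operator `L[g] = (1/q) D_{q⁻¹} D_q g + p D_{q⁻¹} g + r g`, where `W = y D_{q⁻¹} h - h D_{q⁻¹} y`
and `f` is an integrating factor, `(1/q) D_{q⁻¹} f = p f`. With `L[y] = 0` and `L[h] = 1/f`
the right-hand side is `y`. Every step is an algebraic consequence of the two shift rules
`g(x/q) = g x + (1-q) x/q · D_{q⁻¹} g x` and `D_q g (x/q) = D_{q⁻¹} g x`; the first one also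
shows that `W` may be evaluated with `y, h` taken at `x/q` instead of `x`.
-/

section
variable {q : ℝ}

theorem qDeriv_div_eq_qInvDeriv (hq : q ≠ 0) (g : ℝ → ℝ) (x : ℝ) :
    qDeriv q g (x / q) = qInvDeriv q g x := by
  rw [qDeriv, qInvDeriv, mul_div_cancel₀ x hq, mul_div_assoc', div_div_eq_mul_div, mul_comm]

theorem qInvDeriv_mul_eq_qDeriv (hq : q ≠ 0) (g : ℝ → ℝ) (x : ℝ) :
    qInvDeriv q g (q * x) = qDeriv q g x := by
  rw [← qDeriv_div_eq_qInvDeriv hq, mul_div_cancel_left₀ x hq]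

theorem apply_div_eq_add_qInvDeriv (hq : q ≠ 0) (hq1 : q ≠ 1) (g : ℝ → ℝ) {x : ℝ} (hx : x ≠ 0) :
    g (x / q) = g x + (1 - q) * x / q * qInvDeriv q g x := by
  have : (1 - q) * x ≠ 0 := mul_ne_zero (sub_ne_zero.2 hq1.symm) hx
  rw [qInvDeriv]
  field_simp
  ring

theorem qInvDeriv_qDeriv (hq : q ≠ 0) (g : ℝ → ℝ) (x : ℝ) :
    qInvDeriv q (qDeriv q g) x = q * (qInvDeriv q g x - qDeriv q g x) / ((1 - q) * x) := by
  rw [qInvDeriv, qDeriv_div_eq_qInvDeriv hq]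

theorem wronskian_div_eq (hq : q ≠ 0) (hq1 : q ≠ 1) (y h : ℝ → ℝ) {x : ℝ} (hx : x ≠ 0) :
    y (x / q) * qInvDeriv q h x - h (x / q) * qInvDeriv q y x
      = y x * qInvDeriv q h x - h x * qInvDeriv q y x := by
  rw [apply_div_eq_add_qInvDeriv hq hq1 y hx, apply_div_eq_add_qInvDeriv hq hq1 h hx]
  ring

noncomputable def qSecondOrderOp (q : ℝ) (p r g : ℝ → ℝ) (x : ℝ) : ℝ :=
  1 / q * qInvDeriv q (qDeriv q g) x + p x * qInvDeriv q g x + r x * g x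

theorem qDeriv_mul_wronskian_eq (hq : q ≠ 0) (hq1 : q ≠ 1) {p r f : ℝ → ℝ} (y h : ℝ → ℝ) {x : ℝ}
    (hx : x ≠ 0) (hf : 1 / q * qInvDeriv q f x = p x * f x) :
    qDeriv q (fun t => f (t / q) * (y (t / q) * qInvDeriv q h t - h (t / q) * qInvDeriv q y t)) x
      = f x * (y x * qSecondOrderOp q p r h x - h x * qSecondOrderOp q p r y x) := by
  have h1q : (1 - q) * x ≠ 0 := mul_ne_zero (sub_ne_zero.2 hq1.symm) hx
  rw [qDeriv]
  simp only [mul_div_cancel_left₀ x hq, qInvDeriv_mul_eq_qDeriv hq, wronskian_div_eq hq hq1 y h hx,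
    apply_div_eq_add_qInvDeriv hq hq1 f hx, qSecondOrderOp, qInvDeriv_qDeriv hq]
  field_simp
  field_simp at hf
  linear_combination (1 - q) * x * (y x * qInvDeriv q h x - h x * qInvDeriv q y x) * hf
end

/-- q-antiderivative of a solution `y` itself, obtained from a solution `h`
of the inhomogeneous equation with right-hand side `1/f`. -/
theorem q_antiderivative_of_solution (q : ℝ) (hq : 0 < q) (hq1 : q < 1)
    (p r y f h : ℝ → ℝ)
    (hy : ∀ x : ℝ, x ≠ 0 →
      (1 / q) * qInvDeriv q (qDeriv q y) x + p x * qInvDeriv q y x + r x * y x = 0)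
    (hf : ∀ x : ℝ, x ≠ 0 → (1 / q) * qInvDeriv q f x = p x * f x)
    (hf0 : ∀ x : ℝ, x ≠ 0 → f x ≠ 0)
    (hh : ∀ x : ℝ, x ≠ 0 →
      (1 / q) * qInvDeriv q (qDeriv q h) x + p x * qInvDeriv q h x + r x * h x = 1 / f x) :
    (∀ x : ℝ, x ≠ 0 →
      qDeriv q
        (fun t => f (t / q) * (y (t / q) * qInvDeriv q h t - h (t / q) * qInvDeriv q y t)) x
      = y x)
    ∧ (∀ x : ℝ, x ≠ 0 →
      y (x / q) * qInvDeriv q h x - h (x / q) * qInvDeriv q y x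
        = y x * qInvDeriv q h x - h x * qInvDeriv q y x) := by
  have hq0 : q ≠ 0 := hq.ne'
  have hq1' : q ≠ 1 := hq1.ne
  refine ⟨fun x hx => ?_, fun x hx => wronskian_div_eq hq0 hq1' y h hx⟩
  rw [qDeriv_mul_wronskian_eq hq0 hq1' y h hx (hf x hx) (r := r)]
  have hLy : qSecondOrderOp q p r y x = 0 := hy x hx
  have hLh : qSecondOrderOp q p r h x = 1 / f x := hh x hx
  rw [hLy, hLh, mul_zero, sub_zero]
  field_simp [hf0 x hx]
end

section
/- Let 0 < q < 1, and let m, ν be real numbers with ν > −1 and m + ν > 0. Then for all x > 0, the q-derivative at x of the function G(x) := q^{ν−m}·x^{m+1}·( (([m]_q − [ν]_q)/x)·J_ν^{(3)}(x/q; q²) + J_{ν+1}^{(3)}(x; q²)/(1−q) ) equals x^{m+1}·( 1/(1−q)² − ([ν]_q² − q^{ν−m}·[m]_q²)/x² )·J_ν^{(3)}(x; q²). -/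
/-- The finite q-shifted factorial `(z; q)_n`. -/
noncomputable def qPoch (z q : ℝ) (n : ℕ) : ℝ :=
  ∏ k ∈ Finset.range n, (1 - z * q ^ k)

/-- The infinite q-shifted factorial `(z; q)_∞`. -/
noncomputable def qPochInf (z q : ℝ) : ℝ :=
  ∏' k : ℕ, (1 - z * q ^ k)

/-- The q-bracket `[ν]_q = (1 - q^ν)/(1 - q)` for a real `ν` (rpow). -/
noncomputable def qBracket (q ν : ℝ) : ℝ := (1 - q ^ ν) / (1 - q)

/-- The third Jackson q-Bessel function `J_ν^{(3)}(x; q²)`. -/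
noncomputable def J3 (q ν x : ℝ) : ℝ :=
  (qPochInf (q ^ (2 * ν + 2)) (q ^ 2) / qPochInf (q ^ 2) (q ^ 2)) *
    ∑' n : ℕ, ((-1 : ℝ) ^ n * q ^ (n * (n + 1)) * x ^ (2 * (n : ℝ) + ν)) /
      (qPoch (q ^ 2) (q ^ 2) n *
        ∏ j ∈ Finset.range n, (1 - q ^ (2 * ν + 2 + 2 * (j : ℝ))))

/-! The Hahn–Exton function satisfies the two recurrences
`x J_ν(x) = J_{ν+1}(x) - q^{ν+1} J_{ν+1}(qx)` and `q^ν J_ν(x/q) = J_ν(x) - x J_{ν+1}(x)`.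
Both hold term by term on the defining series; in the second one the index shifts by one, using
the ratio of consecutive terms. Substituting them into `G(x) - G(qx)` eliminates `J_ν(x/q)` and
`J_{ν+1}(qx)`, the `J_{ν+1}(x)` contributions cancel, and what is left is a rational identity in
`q^ν`, `q^m`, `x` and `J_ν(x)`. -/

open Filter Topology

lemma qPoch_succ (z Q : ℝ) (n : ℕ) : qPoch z Q (n + 1) = qPoch z Q n * (1 - z * Q ^ n) :=
  Finset.prod_range_succ _ n

lemma multipliable_one_sub_mul_pow (z : ℝ) {Q : ℝ} (hQ : |Q| < 1) :
    Multipliable fun k : ℕ => 1 - z * Q ^ k := by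
  simpa only [sub_eq_add_neg] using
    Real.multipliable_one_add_of_summable ((summable_geometric_of_abs_lt_one hQ).mul_left z).neg

lemma qPochInf_eq_one_sub_mul (z : ℝ) {Q : ℝ} (hQ : |Q| < 1) :
    qPochInf z Q = (1 - z) * qPochInf (z * Q) Q := by
  have hshift : (fun k : ℕ => 1 - z * Q ^ (k + 1)) = fun k => 1 - z * Q * Q ^ k := by
    ext k; ring
  unfold qPochInf
  rw [tprod_eq_zero_mul' (f := fun k : ℕ => 1 - z * Q ^ k)
    (by simpa only [hshift] using multipliable_one_sub_mul_pow (z * Q) hQ), hshift]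
  simp

lemma qPochInf_ne_zero {z Q : ℝ} (hQ : |Q| < 1) (h : ∀ k : ℕ, 1 - z * Q ^ k ≠ 0) :
    qPochInf z Q ≠ 0 := by
  simpa only [qPochInf, sub_eq_add_neg] using tprod_one_add_ne_zero_of_summable
    (fun k => by simpa only [sub_eq_add_neg] using h k)
    ((summable_geometric_of_abs_lt_one hQ).mul_left z).neg.norm

section J3Series

variable {q ν x : ℝ}

lemma abs_sq_lt_one (hq : 0 < q) (hq1 : q < 1) : |q ^ 2| < 1 := by
  rw [abs_of_pos (by positivity)]; nlinarith

lemma rpow_add_two_mul_natCast (hq : 0 < q) (e : ℝ) (n : ℕ) :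
    q ^ (e + 2 * (n : ℝ)) = q ^ e * (q ^ 2) ^ n := by
  rw [Real.rpow_add hq, Real.rpow_mul hq.le, Real.rpow_two, Real.rpow_natCast]

lemma one_sub_rpow_add_two_mul_pos (hq : 0 < q) (hq1 : q < 1) (hν : -1 < ν) (n : ℕ) :
    0 < 1 - q ^ (2 * ν + 2 + 2 * (n : ℝ)) :=
  sub_pos.2 (Real.rpow_lt_one hq.le hq1 (by linarith [(Nat.cast_nonneg n : (0 : ℝ) ≤ n)]))

lemma one_sub_sq_mul_sq_pow_pos (hq : 0 < q) (hq1 : q < 1) (k : ℕ) :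
    0 < 1 - q ^ 2 * (q ^ 2) ^ k := by
  rw [← pow_succ']
  exact sub_pos.2 (pow_lt_one₀ (by positivity) (by nlinarith) k.succ_ne_zero)

lemma qPoch_sq_pos (hq : 0 < q) (hq1 : q < 1) (n : ℕ) : 0 < qPoch (q ^ 2) (q ^ 2) n :=
  Finset.prod_pos fun k _ => one_sub_sq_mul_sq_pow_pos hq hq1 k

lemma prod_one_sub_rpow_pos (hq : 0 < q) (hq1 : q < 1) (hν : -1 < ν) (n : ℕ) :
    0 < ∏ j ∈ Finset.range n, (1 - q ^ (2 * ν + 2 + 2 * (j : ℝ))) :=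
  Finset.prod_pos fun j _ => one_sub_rpow_add_two_mul_pos hq hq1 hν j

noncomputable def J3Const (q ν : ℝ) : ℝ :=
  qPochInf (q ^ (2 * ν + 2)) (q ^ 2) / qPochInf (q ^ 2) (q ^ 2)

lemma J3Const_ne_zero (hq : 0 < q) (hq1 : q < 1) (hν : -1 < ν) :
    J3Const q ν ≠ 0 := by
  refine div_ne_zero (qPochInf_ne_zero (abs_sq_lt_one hq hq1) fun k => ?_)
    (qPochInf_ne_zero (abs_sq_lt_one hq hq1) fun k => (one_sub_sq_mul_sq_pow_pos hq hq1 k).ne')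
  rw [← rpow_add_two_mul_natCast hq]
  exact (one_sub_rpow_add_two_mul_pos hq hq1 hν k).ne'

lemma J3Const_eq_one_sub_mul (hq : 0 < q) (hq1 : q < 1) (ν : ℝ) :
    J3Const q ν = (1 - q ^ (2 * ν + 2)) * J3Const q (ν + 1) := by
  rw [J3Const, J3Const, qPochInf_eq_one_sub_mul _ (abs_sq_lt_one hq hq1), ← Real.rpow_two q,
    ← Real.rpow_add hq, mul_div_assoc]
  ring_nf

noncomputable def J3Term (q ν x : ℝ) (n : ℕ) : ℝ :=
  J3Const q ν *
    ((-1 : ℝ) ^ n * q ^ (n * (n + 1)) * x ^ (2 * (n : ℝ) + ν) /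
      (qPoch (q ^ 2) (q ^ 2) n * ∏ j ∈ Finset.range n, (1 - q ^ (2 * ν + 2 + 2 * (j : ℝ)))))

lemma J3_eq_tsum (q ν x : ℝ) : J3 q ν x = ∑' n, J3Term q ν x n :=
  tsum_mul_left.symm

lemma J3Term_mul_arg {c : ℝ} (hc : 0 ≤ c) (hx : 0 ≤ x) (n : ℕ) :
    J3Term q ν (c * x) n = c ^ (2 * (n : ℝ) + ν) * J3Term q ν x n := by
  simp only [J3Term, Real.mul_rpow hc hx]
  ring

lemma J3Term_ne_zero (hq : 0 < q) (hq1 : q < 1) (hν : -1 < ν) (hx : 0 < x) (n : ℕ) :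
    J3Term q ν x n ≠ 0 := by
  have := qPoch_sq_pos hq hq1 n
  have := prod_one_sub_rpow_pos hq hq1 hν n
  have := Real.rpow_pos_of_pos hx (2 * (n : ℝ) + ν)
  exact mul_ne_zero (J3Const_ne_zero hq hq1 hν) (by positivity)

lemma J3Term_succ (hq : 0 < q) (hq1 : q < 1) (hν : -1 < ν) (hx : 0 < x) (n : ℕ) :
    J3Term q ν x (n + 1) * ((1 - q ^ 2 * (q ^ 2) ^ n) * (1 - q ^ (2 * ν + 2 + 2 * (n : ℝ)))) =
      -(q ^ 2 * (q ^ 2) ^ n * x ^ 2) * J3Term q ν x n := by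
  have hq_exp : q ^ ((n + 1) * (n + 1 + 1)) = q ^ (n * (n + 1)) * (q ^ 2 * (q ^ 2) ^ n) := by
    rw [← pow_succ', ← pow_mul, ← pow_add]; ring_nf
  have hx_exp : x ^ (2 * ((n + 1 : ℕ) : ℝ) + ν) = x ^ (2 * (n : ℝ) + ν) * x ^ 2 := by
    rw [← Real.rpow_natCast x 2, ← Real.rpow_add hx]; push_cast; ring_nf
  have hP := (qPoch_sq_pos hq hq1 n).ne'
  have hD := (prod_one_sub_rpow_pos hq hq1 hν n).ne'
  have ha := (one_sub_sq_mul_sq_pow_pos hq hq1 n).ne'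
  have hb := (one_sub_rpow_add_two_mul_pos hq hq1 hν n).ne'
  rw [J3Term, J3Term, qPoch_succ, Finset.prod_range_succ, hq_exp, hx_exp]
  generalize qPoch (q ^ 2) (q ^ 2) n = P at hP ⊢
  generalize ∏ j ∈ Finset.range n, (1 - q ^ (2 * ν + 2 + 2 * (j : ℝ))) = D at hD ⊢
  generalize 1 - q ^ 2 * (q ^ 2) ^ n = a at ha ⊢
  generalize 1 - q ^ (2 * ν + 2 + 2 * (n : ℝ)) = b at hb ⊢
  field_simp
  ring

lemma J3Term_index_succ (hq : 0 < q) (hq1 : q < 1) (hν : -1 < ν) (hx : 0 < x) (n : ℕ) :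
    J3Term q (ν + 1) x n * (1 - q ^ (2 * ν + 2 + 2 * (n : ℝ))) = x * J3Term q ν x n := by
  have hprod : (1 - q ^ (2 * ν + 2)) *
      ∏ j ∈ Finset.range n, (1 - q ^ (2 * (ν + 1) + 2 + 2 * (j : ℝ))) =
      (∏ j ∈ Finset.range n, (1 - q ^ (2 * ν + 2 + 2 * (j : ℝ)))) *
        (1 - q ^ (2 * ν + 2 + 2 * (n : ℝ))) := by
    rw [← Finset.prod_range_succ, Finset.prod_range_succ']
    push_cast
    ring_nf
  have hx_exp : x ^ (2 * (n : ℝ) + (ν + 1)) = x ^ (2 * (n : ℝ) + ν) * x := by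
    rw [← Real.rpow_add_one hx.ne']; ring_nf
  have hP := (qPoch_sq_pos hq hq1 n).ne'
  have hD := (prod_one_sub_rpow_pos hq hq1 hν n).ne'
  have hD' := (prod_one_sub_rpow_pos hq hq1 (by linarith : -1 < ν + 1) n).ne'
  have hb := (one_sub_rpow_add_two_mul_pos hq hq1 hν n).ne'
  rw [J3Term, J3Term, J3Const_eq_one_sub_mul hq hq1 ν, hx_exp]
  generalize qPoch (q ^ 2) (q ^ 2) n = P at hP ⊢
  generalize ∏ j ∈ Finset.range n, (1 - q ^ (2 * ν + 2 + 2 * (j : ℝ))) = D at hD hprod ⊢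
  generalize ∏ j ∈ Finset.range n, (1 - q ^ (2 * (ν + 1) + 2 + 2 * (j : ℝ))) = D' at hD' hprod ⊢
  generalize 1 - q ^ (2 * ν + 2 + 2 * (n : ℝ)) = b at hb hprod ⊢
  generalize q ^ (2 * ν + 2) = z at hprod ⊢
  field_simp
  linear_combination -J3Const q (ν + 1) * hprod

lemma summable_J3Term (hq : 0 < q) (hq1 : q < 1) (hν : -1 < ν) (hx : 0 < x) :
    Summable (J3Term q ν x) := by
  set g : ℝ → ℝ := fun w => q ^ 2 * w * x ^ 2 / ((1 - q ^ 2 * w) * (1 - q ^ (2 * ν + 2) * w))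
  have hratio : ∀ n : ℕ, ‖J3Term q ν x (n + 1)‖ / ‖J3Term q ν x n‖ = g ((q ^ 2) ^ n) := by
    intro n
    have ha := one_sub_sq_mul_sq_pow_pos hq hq1 n
    have hb := one_sub_rpow_add_two_mul_pos hq hq1 hν n
    rw [eq_div_of_mul_eq (mul_pos ha hb).ne' (J3Term_succ hq hq1 hν hx n), norm_div, norm_mul,
      mul_div_right_comm,
      mul_div_cancel_right₀ _ (norm_ne_zero_iff.2 (J3Term_ne_zero hq hq1 hν hx n)),
      norm_neg, Real.norm_of_nonneg (by positivity), Real.norm_of_nonneg (mul_pos ha hb).le,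
      rpow_add_two_mul_natCast hq]
  have hg : Tendsto g (𝓝 0) (𝓝 0) := by
    have hcont : ContinuousAt g 0 := ContinuousAt.div (by fun_prop) (by fun_prop) (by simp)
    simpa [g] using hcont.tendsto
  refine summable_of_ratio_test_tendsto_lt_one zero_lt_one
    (Eventually.of_forall (J3Term_ne_zero hq hq1 hν hx)) ?_
  exact (hg.comp (tendsto_pow_atTop_nhds_zero_of_lt_one (by positivity)
    (pow_lt_one₀ hq.le hq1 two_ne_zero))).congr fun n => (hratio n).symm

lemma mul_J3_eq_sub_J3_index_succ (hq : 0 < q) (hq1 : q < 1) (hν : -1 < ν) (hx : 0 < x) :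
    x * J3 q ν x = J3 q (ν + 1) x - q ^ (ν + 1) * J3 q (ν + 1) (q * x) := by
  have hν1 : -1 < ν + 1 := by linarith
  simp only [J3_eq_tsum, ← tsum_mul_left]
  rw [← (summable_J3Term hq hq1 hν1 hx).tsum_sub
    ((summable_J3Term hq hq1 hν1 (by positivity)).mul_left _)]
  refine tsum_congr fun n => ?_
  have hexp : q ^ (ν + 1) * q ^ (2 * (n : ℝ) + (ν + 1)) = q ^ (2 * ν + 2 + 2 * (n : ℝ)) := by
    rw [← Real.rpow_add hq]; ring_nf
  rw [J3Term_mul_arg hq.le hx.le, ← J3Term_index_succ hq hq1 hν hx n, ← hexp]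
  ring

lemma rpow_mul_J3_div_eq_sub (hq : 0 < q) (hq1 : q < 1) (hν : -1 < ν) (hx : 0 < x) :
    q ^ ν * J3 q ν (x / q) = J3 q ν x - x * J3 q (ν + 1) x := by
  have hscale (n : ℕ) : q ^ ν * J3Term q ν (x / q) n = J3Term q ν x n / (q ^ 2) ^ n := by
    rw [div_eq_inv_mul, J3Term_mul_arg (inv_nonneg.2 hq.le) hx.le, Real.inv_rpow hq.le, add_comm,
      rpow_add_two_mul_natCast hq]
    field_simp
  have hstep (n : ℕ) : q ^ ν * J3Term q ν (x / q) (n + 1) - J3Term q ν x (n + 1) =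
      -(x * J3Term q (ν + 1) x n) := by
    have hsucc := J3Term_succ hq hq1 hν hx n
    have hidx := J3Term_index_succ hq hq1 hν hx n
    have hb := (one_sub_rpow_add_two_mul_pos hq hq1 hν n).ne'
    rw [hscale, eq_div_of_mul_eq hb hidx, pow_succ']
    generalize q ^ (2 * ν + 2 + 2 * (n : ℝ)) = w at hsucc hb ⊢
    field_simp
    linear_combination hsucc
  have htail : HasSum (fun n => q ^ ν * J3Term q ν (x / q) (n + 1) - J3Term q ν x (n + 1))
      (-(x * J3 q (ν + 1) x)) := by
    rw [J3_eq_tsum, ← tsum_mul_left]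
    simp only [hstep]
    exact ((summable_J3Term hq hq1 (by linarith) hx).mul_left x).hasSum.neg
  have hf0 : q ^ ν * J3Term q ν (x / q) 0 - J3Term q ν x 0 = 0 := by
    rw [hscale, pow_zero, div_one, sub_self]
  have hfull := (hasSum_nat_add_iff
    (f := fun n => q ^ ν * J3Term q ν (x / q) n - J3Term q ν x n) 1).1 htail
  simp only [Finset.range_one, Finset.sum_singleton, hf0, add_zero] at hfull
  have hsum := ((summable_J3Term hq hq1 hν (div_pos hx hq)).hasSum.mul_left (q ^ ν)).sub
    (summable_J3Term hq hq1 hν hx).hasSum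
  rw [J3_eq_tsum q ν (x / q), J3_eq_tsum q ν x]
  linear_combination hsum.unique hfull

end J3Series

theorem qIntegral_J3_power_general (q m ν : ℝ) (hq : 0 < q) (hq1 : q < 1)
    (hν : -1 < ν) :
    ∀ x : ℝ, 0 < x →
      qDeriv q
        (fun t => q ^ (ν - m) * t ^ (m + 1) *
          ((qBracket q m - qBracket q ν) / t * J3 q ν (t / q)
            + J3 q (ν + 1) t / (1 - q))) x
      = x ^ (m + 1) *
          (1 / (1 - q) ^ 2 - ((qBracket q ν) ^ 2 - q ^ (ν - m) * (qBracket q m) ^ 2) / x ^ 2)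
          * J3 q ν x := by
  intro x hx
  have hqν : 0 < q ^ ν := Real.rpow_pos_of_pos hq ν
  have hdiv : J3 q ν (x / q) = (J3 q ν x - x * J3 q (ν + 1) x) / q ^ ν := by
    rw [← rpow_mul_J3_div_eq_sub hq hq1 hν hx, mul_div_cancel_left₀ _ hqν.ne']
  have hmul : J3 q (ν + 1) (q * x) = (J3 q (ν + 1) x - x * J3 q ν x) / (q ^ ν * q) := by
    rw [mul_J3_eq_sub_J3_index_succ hq hq1 hν hx, ← Real.rpow_add_one hq.ne']
    field_simp
    ring
  simp only [qDeriv, qBracket]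
  rw [mul_div_cancel_left₀ x hq.ne', Real.mul_rpow hq.le hx.le, Real.rpow_add_one hq.ne',
    Real.rpow_sub hq, hdiv, hmul]
  field_simp
  ring

/-- Indefinite q-integral of `x^{m+1}(1/(1-q)² − ([ν]² − q^{ν−m}[m]²)/x²) J_ν^{(3)}(x;q²)`. -/
theorem qIntegral_J3_power (q m ν : ℝ) (hq : 0 < q) (hq1 : q < 1)
    (hν : -1 < ν) (hmν : 0 < m + ν) :
    ∀ x : ℝ, 0 < x →
      qDeriv q
        (fun t => q ^ (ν - m) * t ^ (m + 1) *
          ((qBracket q m - qBracket q ν) / t * J3 q ν (t / q)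
            + J3 q (ν + 1) t / (1 - q))) x
      = x ^ (m + 1) *
          (1 / (1 - q) ^ 2 - ((qBracket q ν) ^ 2 - q ^ (ν - m) * (qBracket q m) ^ 2) / x ^ 2)
          * J3 q ν x :=
  qIntegral_J3_power_general q m ν hq hq1 hν
end
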